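/- Let (a_1, a_2) and (b_1, b_2) be two orthonormal bases of ℂ², and let c = max over i, j ∈ {1,2} of |⟨a_i, b_j⟩|. Then the lower bound (1/2)(1 − c²) on the average fidelity-based disturbance is tight: there exists a unit vector ψ ∈ ℂ² such that (1/2)[(1 − Σ_{i=1}^{2} |⟨a_i, ψ⟩|⁴) + (1 − Σ_{j=1}^{2} |⟨b_j, ψ⟩|⁴)] = (1/2)(1 − c²). -/

import Mathlib

/-!
Choose `a i`, `b j` with `‖⟪a i, b j⟫‖ = c` and rotate the phase of `b j` so that the overlap is
the real number `c`. The normalised sum `ψ` of the two vectors then has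
`‖⟪a i, ψ⟫‖² = ‖⟪b j, ψ⟫‖² = (1 + c) / 2`, so by Parseval both measurements have outcome
probabilities `(1 ± c) / 2`, whose squares add up to `(1 + c²) / 2`.
-/

open scoped InnerProductSpace

lemma sum_sq_fin_two_eq_of_sum_eq_one {p : Fin 2 → ℝ} (hp : ∑ i, p i = 1) {k : Fin 2} {c : ℝ}
    (hk : p k = (1 + c) / 2) : ∑ i, p i ^ 2 = (1 + c ^ 2) / 2 := by
  rw [Fin.sum_univ_succAbove _ k, Fin.sum_univ_one] at hp ⊢
  rw [show p (k.succAbove 0) = 1 - p k by linarith, hk]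
  ring

section InnerProductSpace

variable (𝕜 : Type*) {E : Type*} [RCLike 𝕜] [NormedAddCommGroup E] [InnerProductSpace 𝕜 E]

noncomputable def fidelityDisturbance {ι : Type*} [Fintype ι] (a : ι → E) (ψ : E) : ℝ :=
  1 - ∑ i, ‖⟪a i, ψ⟫_𝕜‖ ^ 4

variable {𝕜}

lemma Orthonormal.sum_sq_norm_inner_right_of_card_eq_finrank [FiniteDimensional 𝕜 E]
    {ι : Type*} [Fintype ι] {v : ι → E} (hv : Orthonormal 𝕜 v)
    (hcard : Fintype.card ι = Module.finrank 𝕜 E) (x : E) :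
    ∑ i, ‖⟪v i, x⟫_𝕜‖ ^ 2 = ‖x‖ ^ 2 := by
  classical
  simpa using (OrthonormalBasis.mk hv
    (hv.linearIndependent.span_eq_top_of_card_eq_finrank' hcard).ge).sum_sq_norm_inner_right x

lemma fidelityDisturbance_eq_of_norm_inner_sq_eq [FiniteDimensional 𝕜 E]
    (hE : Module.finrank 𝕜 E = 2) {v : Fin 2 → E} (hv : Orthonormal 𝕜 v) {ψ : E} (hψ : ‖ψ‖ = 1)
    {k : Fin 2} {c : ℝ} (hk : ‖⟪v k, ψ⟫_𝕜‖ ^ 2 = (1 + c) / 2) :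
    fidelityDisturbance 𝕜 v ψ = (1 - c ^ 2) / 2 := by
  have hsum : ∑ i, ‖⟪v i, ψ⟫_𝕜‖ ^ 2 = 1 := by
    rw [hv.sum_sq_norm_inner_right_of_card_eq_finrank (by simp [hE]), hψ, one_pow]
  have := sum_sq_fin_two_eq_of_sum_eq_one hsum hk
  simp only [← pow_mul] at this
  rw [fidelityDisturbance, this]
  ring

lemma exists_norm_inner_sq_eq_of_inner_eq_ofReal {u w : E} (hu : ‖u‖ = 1) (hw : ‖w‖ = 1)
    {c : ℝ} (hc : -1 < c) (huw : ⟪u, w⟫_𝕜 = c) :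
    ∃ ψ : E, ‖ψ‖ = 1 ∧ ‖⟪u, ψ⟫_𝕜‖ ^ 2 = (1 + c) / 2 ∧ ‖⟪w, ψ⟫_𝕜‖ ^ 2 = (1 + c) / 2 := by
  have hnorm : ‖u + w‖ ^ 2 = 2 * (1 + c) := by
    rw [@norm_add_sq 𝕜, huw, RCLike.ofReal_re, hu, hw]; ring
  have hpos : 0 < ‖u + w‖ := by
    by_contra h
    nlinarith [norm_nonneg (u + w)]
  have h_u : ⟪u, u + w⟫_𝕜 = ((1 + c : ℝ) : 𝕜) := by
    rw [inner_add_right, inner_self_eq_norm_sq_to_K, hu, huw]; push_cast; ring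
  have h_w : ⟪w, u + w⟫_𝕜 = ((1 + c : ℝ) : 𝕜) := by
    rw [inner_add_right, inner_self_eq_norm_sq_to_K, hw, ← inner_conj_symm, huw,
      RCLike.conj_ofReal]
    push_cast; ring
  have h_sq : ‖(‖u + w‖⁻¹ : 𝕜) * ((1 + c : ℝ) : 𝕜)‖ ^ 2 = (1 + c) / 2 := by
    rw [norm_mul, norm_inv, RCLike.norm_ofReal, RCLike.norm_ofReal, abs_norm,
      abs_of_pos (by linarith), mul_pow, inv_pow, hnorm]
    field_simp
  refine ⟨(‖u + w‖⁻¹ : 𝕜) • (u + w), norm_smul_inv_norm (norm_pos_iff.mp hpos), ?_, ?_⟩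
  · rw [inner_smul_right, h_u, h_sq]
  · rw [inner_smul_right, h_w, h_sq]

lemma exists_norm_inner_sq_eq {u w : E} (hu : ‖u‖ = 1) (hw : ‖w‖ = 1) :
    ∃ ψ : E, ‖ψ‖ = 1 ∧ ‖⟪u, ψ⟫_𝕜‖ ^ 2 = (1 + ‖⟪u, w⟫_𝕜‖) / 2 ∧
      ‖⟪w, ψ⟫_𝕜‖ ^ 2 = (1 + ‖⟪u, w⟫_𝕜‖) / 2 := by
  obtain ⟨ζ, hζ, hζuw⟩ := RCLike.exists_norm_eq_mul_self ⟪u, w⟫_𝕜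
  obtain ⟨ψ, hψ, h_u, h_w⟩ := exists_norm_inner_sq_eq_of_inner_eq_ofReal (𝕜 := 𝕜)
    (c := ‖⟪u, w⟫_𝕜‖) hu (by rw [norm_smul, hζ, hw, one_mul] : ‖ζ • w‖ = 1) (by linarith [norm_nonneg ⟪u, w⟫_𝕜]) (by rw [inner_smul_right, hζuw])
  refine ⟨ψ, hψ, h_u, ?_⟩
  rwa [inner_smul_left, norm_mul, RCLike.norm_conj, hζ, one_mul] at h_w

end InnerProductSpace

lemma Matrix.star_dotProduct_eq_inner {𝕜 ι : Type*} [RCLike 𝕜] [Fintype ι] (x y : ι → 𝕜) :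
    star x ⬝ᵥ y = ⟪WithLp.toLp 2 x, WithLp.toLp 2 y⟫_𝕜 := by
  rw [EuclideanSpace.inner_toLp_toLp, dotProduct_comm]

lemma orthonormal_toLp_of_star_dotProduct {𝕜 ι : Type*} [RCLike 𝕜] [Fintype ι] [DecidableEq ι]
    {a : ι → ι → 𝕜} (ha : ∀ i j, star (a i) ⬝ᵥ a j = if i = j then (1 : 𝕜) else 0) :
    Orthonormal 𝕜 fun i ↦ WithLp.toLp 2 (a i) :=
  orthonormal_iff_ite.mpr fun i j ↦ by rw [← Matrix.star_dotProduct_eq_inner, ha]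

/-- For two orthonormal bases `(a 1, a 2)` and `(b 1, b 2)` of `ℂ²`
with overlap constant `c = max_{i,j} |⟨a i, b j⟩|`, the lower bound `(1/2)(1 - c²)` on
the average fidelity-based disturbance is tight: some unit vector `ψ` attains it with
equality. -/
theorem qubit_disturbance_tradeoff_tight
    (a b : Fin 2 → (Fin 2 → ℂ))
    (ha : ∀ i j, star (a i) ⬝ᵥ a j = if i = j then (1 : ℂ) else 0)
    (hb : ∀ i j, star (b i) ⬝ᵥ b j = if i = j then (1 : ℂ) else 0)
    (c : ℝ)
    (hc : IsGreatest {x : ℝ | ∃ i j, x = ‖star (a i) ⬝ᵥ b j‖} c) :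
    ∃ ψ : Fin 2 → ℂ, star ψ ⬝ᵥ ψ = 1 ∧
      (1 / 2) * ((1 - ∑ i, ‖star (a i) ⬝ᵥ ψ‖ ^ 4)
          + (1 - ∑ j, ‖star (b j) ⬝ᵥ ψ‖ ^ 4))
        = (1 / 2) * (1 - c ^ 2) := by
  obtain ⟨⟨i, j, rfl⟩, -⟩ := hc
  have hA := orthonormal_toLp_of_star_dotProduct ha
  have hB := orthonormal_toLp_of_star_dotProduct hb
  obtain ⟨ψ, hψ, hAψ, hBψ⟩ := exists_norm_inner_sq_eq (𝕜 := ℂ) (hA.1 i) (hB.1 j)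
  have hE : Module.finrank ℂ (EuclideanSpace ℂ (Fin 2)) = 2 := finrank_euclideanSpace_fin
  have hDA := fidelityDisturbance_eq_of_norm_inner_sq_eq hE hA hψ hAψ
  have hDB := fidelityDisturbance_eq_of_norm_inner_sq_eq hE hB hψ hBψ
  refine ⟨ψ.ofLp, ?_, ?_⟩
  · rw [Matrix.star_dotProduct_eq_inner, WithLp.toLp_ofLp, inner_self_eq_norm_sq_to_K, hψ]
    simp
  · simp only [Matrix.star_dotProduct_eq_inner, WithLp.toLp_ofLp]
    rw [fidelityDisturbance] at hDA hDB
    rw [hDA, hDB]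
    ring
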